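/- arXiv:1608.02695 — 2 statements merged into one kernel-verified Lean document; each statement's English description precedes it below -/
import Mathlib

section
/- If 1/2 < C_1 ≤ C_2 and ρ_{12} = 0, then for every Q in P_I(C_1) with Q < 1, P_cor^opt(Q) = ρ_{11}C_1 + ρ_{22}C_2 − C_1Q; equivalently, R_cor^opt(Q) = P_cor^opt(Q)/(1−Q) = C_1 + ρ_{22}(C_2−C_1)/(1−Q). -/
/-!
Write `P_i = ν_i ν_iᴴ` and `Λ = C₁P₁ + C₂P₂`. Since `C₁ ≤ C₂` and `C₁, C₂ > 1/2`, `Λ` dominates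
`C₁·1`, `ρ̄₁ = C₁P₁ + (1 - C₂)P₂` and `ρ̄₂ = (1 - C₁)P₁ + C₂P₂` in the Loewner order. Conjugating by
`S = ρ₀^{1/2}` turns these into `C₁ρ₀, q₁ρ₁, q₂ρ₂ ≤ SΛS`, so for every POVM
`P̄_cor(C₁) ≤ tr(SΛS) = tr(Λρ₀) = C₁ρ₁₁ + C₂ρ₂₂`. If `ρ₁₂ = 0` then `ρ₀ = ρ₁₁P₁ + ρ₂₂P₂`, and the
POVM `(0, ρ₁₁S⁻¹P₁S⁻¹, ρ₂₂S⁻¹P₂S⁻¹)` attains the bound, which is therefore `P̄_cor^opt(C₁)`.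
Finally, a POVM attaining `P̄_cor^opt(C₁)` with `P_I = Q` has `P_cor = P̄_cor^opt(C₁) - C₁Q`, and
the bound `P̄_cor ≤ P̄_cor^opt(C₁)` shows that no POVM with `P_I = Q` does better.
-/

open Matrix ComplexOrder

noncomputable section

namespace FRIR

/-- A three-outcome POVM on a qubit: `M₀` is the inconclusive outcome. -/
def IsPOVM (M₀ M₁ M₂ : Matrix (Fin 2) (Fin 2) ℂ) : Prop :=
  M₀.PosSemidef ∧ M₁.PosSemidef ∧ M₂.PosSemidef ∧ M₀ + M₁ + M₂ = 1

/-- `ρ₀ = q₁ρ₁ + q₂ρ₂`. -/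
def rho0 (q₁ q₂ : ℝ) (ρ₁ ρ₂ : Matrix (Fin 2) (Fin 2) ℂ) : Matrix (Fin 2) (Fin 2) ℂ :=
  (q₁ : ℂ) • ρ₁ + (q₂ : ℂ) • ρ₂

/-- The probability of the inconclusive result, `P_I = tr(ρ₀M₀)`. -/
def PIof (q₁ q₂ : ℝ) (ρ₁ ρ₂ M₀ : Matrix (Fin 2) (Fin 2) ℂ) : ℝ :=
  (Matrix.trace (rho0 q₁ q₂ ρ₁ ρ₂ * M₀)).re

/-- `P_cor = q₁tr(ρ₁M₁) + q₂tr(ρ₂M₂)`. -/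
def Pcor (q₁ q₂ : ℝ) (ρ₁ ρ₂ M₁ M₂ : Matrix (Fin 2) (Fin 2) ℂ) : ℝ :=
  q₁ * (Matrix.trace (ρ₁ * M₁)).re + q₂ * (Matrix.trace (ρ₂ * M₂)).re

/-- `P̄_cor = q·tr(ρ₀M₀) + q₁tr(ρ₁M₁) + q₂tr(ρ₂M₂)`. -/
def PbarCor (q q₁ q₂ : ℝ) (ρ₁ ρ₂ M₀ M₁ M₂ : Matrix (Fin 2) (Fin 2) ℂ) : ℝ :=
  q * PIof q₁ q₂ ρ₁ ρ₂ M₀ + Pcor q₁ q₂ ρ₁ ρ₂ M₁ M₂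

/-- `P̄_cor^opt(q)`: the maximal value of `P̄_cor` over all POVMs. -/
def PbarOpt (q q₁ q₂ : ℝ) (ρ₁ ρ₂ : Matrix (Fin 2) (Fin 2) ℂ) : ℝ :=
  sSup {x : ℝ | ∃ M₀ M₁ M₂, IsPOVM M₀ M₁ M₂ ∧ PbarCor q q₁ q₂ ρ₁ ρ₂ M₀ M₁ M₂ = x}

/-- `P_cor^opt(Q)`: the maximal value of `P_cor` over POVMs with `P_I = Q`. -/
def PcorOpt (Q q₁ q₂ : ℝ) (ρ₁ ρ₂ : Matrix (Fin 2) (Fin 2) ℂ) : ℝ :=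
  sSup {x : ℝ | ∃ M₀ M₁ M₂, IsPOVM M₀ M₁ M₂ ∧
    PIof q₁ q₂ ρ₁ ρ₂ M₀ = Q ∧ Pcor q₁ q₂ ρ₁ ρ₂ M₁ M₂ = x}

/-- `P_I(q) = { tr(ρ₀M₀) : POVMs attaining P̄_cor^opt(q) }`. -/
def PIset (q q₁ q₂ : ℝ) (ρ₁ ρ₂ : Matrix (Fin 2) (Fin 2) ℂ) : Set ℝ :=
  {Q : ℝ | ∃ M₀ M₁ M₂, IsPOVM M₀ M₁ M₂ ∧
    PbarCor q q₁ q₂ ρ₁ ρ₂ M₀ M₁ M₂ = PbarOpt q q₁ q₂ ρ₁ ρ₂ ∧ PIof q₁ q₂ ρ₁ ρ₂ M₀ = Q}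

/-- `q₀⁽⁰⁾ = sup{q > 0 : 0 ∈ P_I(q)}`. -/
def q0low (q₁ q₂ : ℝ) (ρ₁ ρ₂ : Matrix (Fin 2) (Fin 2) ℂ) : ℝ :=
  sSup {q : ℝ | 0 < q ∧ (0 : ℝ) ∈ PIset q q₁ q₂ ρ₁ ρ₂}

/-- `q₀⁽¹⁾ = inf{q > 0 : 1 ∈ P_I(q)}`. -/
def q0high (q₁ q₂ : ℝ) (ρ₁ ρ₂ : Matrix (Fin 2) (Fin 2) ℂ) : ℝ :=
  sInf {q : ℝ | 0 < q ∧ (1 : ℝ) ∈ PIset q q₁ q₂ ρ₁ ρ₂}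

open scoped MatrixOrder

section Matrices

variable {n 𝕜 : Type*} [Fintype n] [RCLike 𝕜]

theorem _root_.Matrix.PosSemidef.trace_mul_nonneg {A B : Matrix n n 𝕜}
    (hA : A.PosSemidef) (hB : B.PosSemidef) : 0 ≤ (A * B).trace := by
  classical
  obtain ⟨X, rfl⟩ := CStarAlgebra.nonneg_iff_eq_star_mul_self.mp hA.nonneg
  rw [Matrix.mul_assoc, Matrix.trace_mul_comm]
  exact (hB.mul_mul_conjTranspose_same X).trace_nonneg

theorem trace_mul_le_trace_mul_of_le {W Y M : Matrix n n 𝕜} (hWY : W ≤ Y)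
    (hM : M.PosSemidef) : (W * M).trace ≤ (Y * M).trace := by
  have := (Matrix.le_iff.mp hWY).trace_mul_nonneg hM
  rwa [Matrix.sub_mul, Matrix.trace_sub, sub_nonneg] at this

theorem sum_vecMulVec_eq_one_of_orthonormal [DecidableEq n] {ν : n → n → 𝕜}
    (hν : ∀ i j, star (ν i) ⬝ᵥ ν j = if i = j then 1 else 0) :
    ∑ i, vecMulVec (ν i) (star (ν i)) = 1 := by
  set U : Matrix n n 𝕜 := Matrix.of fun i => star (ν i)
  have hU : U * Uᴴ = 1 := by
    ext i j
    simpa [U, Matrix.mul_apply, dotProduct, one_apply] using hν i j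
  rw [← mul_eq_one_comm.mp hU]
  ext a b
  simp [U, Matrix.mul_apply, Matrix.sum_apply, vecMulVec_apply]

theorem vecMulVec_mul_mul_vecMulVec {R : Type*} [CommSemiring R] (a b c d : n → R)
    (A : Matrix n n R) :
    vecMulVec a b * A * vecMulVec c d = (b ⬝ᵥ (A *ᵥ c)) • vecMulVec a d := by
  rw [vecMulVec_mul, vecMulVec_mul_vecMulVec, dotProduct_mulVec, vecMulVec_smul]

theorem trace_vecMulVec_mul {R : Type*} [CommSemiring R] (a b : n → R) (A : Matrix n n R) :
    (vecMulVec a b * A).trace = b ⬝ᵥ (A *ᵥ a) := by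
  rw [vecMulVec_mul, trace_vecMulVec, dotProduct_comm, dotProduct_mulVec]

theorem vecMulVec_star_mul_vecMulVec_star {ν μ : n → 𝕜} (c : 𝕜)
    (h : star ν ⬝ᵥ μ = c) :
    vecMulVec ν (star ν) * vecMulVec μ (star μ) = c • vecMulVec ν (star μ) := by
  rw [vecMulVec_mul_vecMulVec, h, vecMulVec_smul]

theorem trace_smul_add_smul_mul_vecMulVec {ν₁ ν₂ : n → 𝕜} (hν₁ : star ν₁ ⬝ᵥ ν₁ = 1)
    (hν₂₁ : star ν₂ ⬝ᵥ ν₁ = 0) (a b : 𝕜) :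
    ((a • vecMulVec ν₁ (star ν₁) + b • vecMulVec ν₂ (star ν₂)) * vecMulVec ν₁ (star ν₁)).trace
      = a := by
  rw [Matrix.add_mul, Matrix.smul_mul, Matrix.smul_mul,
    vecMulVec_star_mul_vecMulVec_star 1 hν₁,
    vecMulVec_star_mul_vecMulVec_star 0 hν₂₁]
  simp [trace_vecMulVec, dotProduct_comm ν₁, hν₁]

theorem eq_smul_add_smul_of_dotProduct_mulVec_eq_zero [DecidableEq n] {A : Matrix n n 𝕜}
    (hA : A.IsHermitian) {ν₁ ν₂ : n → 𝕜} (hP : vecMulVec ν₁ (star ν₁) + vecMulVec ν₂ (star ν₂) = 1)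
    (h₁₂ : star ν₁ ⬝ᵥ (A *ᵥ ν₂) = 0) :
    A = (star ν₁ ⬝ᵥ (A *ᵥ ν₁)) • vecMulVec ν₁ (star ν₁)
      + (star ν₂ ⬝ᵥ (A *ᵥ ν₂)) • vecMulVec ν₂ (star ν₂) := by
  have h₂₁ : star ν₂ ⬝ᵥ (A *ᵥ ν₁) = 0 := by
    rw [star_dotProduct, star_mulVec, hA.eq, ← dotProduct_mulVec, h₁₂, star_zero]
  calc A = (vecMulVec ν₁ (star ν₁) + vecMulVec ν₂ (star ν₂)) * A
        * (vecMulVec ν₁ (star ν₁) + vecMulVec ν₂ (star ν₂)) := by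
        rw [hP, Matrix.one_mul, Matrix.mul_one]
    _ = _ := by
        simp only [Matrix.add_mul, Matrix.mul_add, vecMulVec_mul_mul_vecMulVec, h₁₂, h₂₁,
          zero_smul, add_zero, zero_add]

theorem trace_conj_mul_conj_inv [DecidableEq n] {S : Matrix n n 𝕜} (hS : IsUnit S.det)
    (X P : Matrix n n 𝕜) : (S * X * S * (S⁻¹ * P * S⁻¹)).trace = (X * P).trace := by
  calc (S * X * S * (S⁻¹ * P * S⁻¹)).trace = (S * (X * (S * S⁻¹) * P) * S⁻¹).trace := by
        simp only [Matrix.mul_assoc]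
    _ = (X * P).trace := by
        rw [mul_nonsing_inv S hS, Matrix.mul_one, trace_mul_cycle, nonsing_inv_mul S hS,
          Matrix.one_mul]

theorem smul_vecMulVec_add_smul_vecMulVec_le {a₁ a₂ b₁ b₂ : ℝ}
    (h₁ : a₁ ≤ b₁) (h₂ : a₂ ≤ b₂) (ν₁ ν₂ : n → ℂ) :
    (a₁ : ℂ) • vecMulVec ν₁ (star ν₁) + (a₂ : ℂ) • vecMulVec ν₂ (star ν₂)
      ≤ (b₁ : ℂ) • vecMulVec ν₁ (star ν₁) + (b₂ : ℂ) • vecMulVec ν₂ (star ν₂) := by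
  have hproj : ∀ {r : ℝ} (ν : n → ℂ), 0 ≤ r → ((r : ℂ) • vecMulVec ν (star ν)).PosSemidef :=
    fun ν hr => (posSemidef_vecMulVec_self_star ν).smul (by exact_mod_cast hr)
  rw [Matrix.le_iff, add_sub_add_comm, ← sub_smul, ← sub_smul, ← Complex.ofReal_sub,
    ← Complex.ofReal_sub]
  exact (hproj ν₁ (sub_nonneg.mpr h₁)).add (hproj ν₂ (sub_nonneg.mpr h₂))

theorem vecMulVec_add_vecMulVec_eq_one {ν₁ ν₂ : Fin 2 → 𝕜} (hν₁ : star ν₁ ⬝ᵥ ν₁ = 1)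
    (hν₂ : star ν₂ ⬝ᵥ ν₂ = 1) (hν₁₂ : star ν₁ ⬝ᵥ ν₂ = 0) :
    vecMulVec ν₁ (star ν₁) + vecMulVec ν₂ (star ν₂) = 1 := by
  have hν₂₁ : star ν₂ ⬝ᵥ ν₁ = 0 := by rw [star_dotProduct, hν₁₂, star_zero]
  simpa [Fin.sum_univ_two] using sum_vecMulVec_eq_one_of_orthonormal (ν := ![ν₁, ν₂])
    (by intro i j; fin_cases i <;> fin_cases j <;> simp [hν₁, hν₂, hν₁₂, hν₂₁])

end Matrices

theorem IsPOVM.sum_re_trace_mul_le {M₀ M₁ M₂ W₀ W₁ W₂ Y : Matrix (Fin 2) (Fin 2) ℂ}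
    (hM : IsPOVM M₀ M₁ M₂) (h₀ : W₀ ≤ Y) (h₁ : W₁ ≤ Y) (h₂ : W₂ ≤ Y) :
    (W₀ * M₀).trace.re + (W₁ * M₁).trace.re + (W₂ * M₂).trace.re ≤ Y.trace.re := by
  obtain ⟨hM₀, hM₁, hM₂, hsum⟩ := hM
  have hY : Y.trace.re = (Y * M₀).trace.re + (Y * M₁).trace.re + (Y * M₂).trace.re := by
    simp only [← Complex.add_re, ← Matrix.trace_add, ← Matrix.mul_add, hsum, Matrix.mul_one]
  have e₀ := (Complex.le_def.mp (trace_mul_le_trace_mul_of_le h₀ hM₀)).1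
  have e₁ := (Complex.le_def.mp (trace_mul_le_trace_mul_of_le h₁ hM₁)).1
  have e₂ := (Complex.le_def.mp (trace_mul_le_trace_mul_of_le h₂ hM₂)).1
  linarith

theorem pbarCor_eq_sum_re_trace (q q₁ q₂ : ℝ) (ρ₁ ρ₂ M₀ M₁ M₂ : Matrix (Fin 2) (Fin 2) ℂ) :
    PbarCor q q₁ q₂ ρ₁ ρ₂ M₀ M₁ M₂ = (((q : ℂ) • rho0 q₁ q₂ ρ₁ ρ₂) * M₀).trace.re
      + (((q₁ : ℂ) • ρ₁) * M₁).trace.re + (((q₂ : ℂ) • ρ₂) * M₂).trace.re := by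
  simp only [PbarCor, PIof, Pcor, Matrix.smul_mul, Matrix.trace_smul, smul_eq_mul,
    Complex.re_ofReal_mul, add_assoc]

theorem pcorOpt_eq_of_mem_PIset {q q₁ q₂ Q : ℝ} {ρ₁ ρ₂ : Matrix (Fin 2) (Fin 2) ℂ}
    (hle : ∀ M₀ M₁ M₂, IsPOVM M₀ M₁ M₂ →
      PbarCor q q₁ q₂ ρ₁ ρ₂ M₀ M₁ M₂ ≤ PbarOpt q q₁ q₂ ρ₁ ρ₂)
    (hQ : Q ∈ PIset q q₁ q₂ ρ₁ ρ₂) :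
    PcorOpt Q q₁ q₂ ρ₁ ρ₂ = PbarOpt q q₁ q₂ ρ₁ ρ₂ - q * Q := by
  obtain ⟨M₀, M₁, M₂, hM, hopt, rfl⟩ := hQ
  refine IsGreatest.csSup_eq ⟨⟨M₀, M₁, M₂, hM, rfl, ?_⟩, ?_⟩
  · rw [← hopt, PbarCor]
    ring
  · rintro _ ⟨N₀, N₁, N₂, hN, hPI, rfl⟩
    have := hle N₀ N₁ N₂ hN
    rw [PbarCor, hPI] at this
    linarith

section TwoStates

variable {q₁ q₂ C₁ C₂ ρ11 ρ22 : ℝ} {ρ₁ ρ₂ S : Matrix (Fin 2) (Fin 2) ℂ} {ν₁ ν₂ : Fin 2 → ℂ}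

theorem pbarCor_le (hS : S.IsHermitian) (hSS : S * S = rho0 q₁ q₂ ρ₁ ρ₂)
    (hν₁ : star ν₁ ⬝ᵥ ν₁ = 1) (hν₂ : star ν₂ ⬝ᵥ ν₂ = 1) (hν₁₂ : star ν₁ ⬝ᵥ ν₂ = 0)
    (hC₁₂ : C₁ ≤ C₂) (hC₁ : 1 / 2 < C₁)
    (hbar₁ : S * ((C₁ : ℂ) • vecMulVec ν₁ (star ν₁)
        + ((1 - C₂ : ℝ) : ℂ) • vecMulVec ν₂ (star ν₂)) * S = (q₁ : ℂ) • ρ₁)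
    (hbar₂ : S * (((1 - C₁ : ℝ) : ℂ) • vecMulVec ν₁ (star ν₁)
        + (C₂ : ℂ) • vecMulVec ν₂ (star ν₂)) * S = (q₂ : ℂ) • ρ₂)
    (h11 : (ρ11 : ℂ) = star ν₁ ⬝ᵥ (rho0 q₁ q₂ ρ₁ ρ₂ *ᵥ ν₁))
    (h22 : (ρ22 : ℂ) = star ν₂ ⬝ᵥ (rho0 q₁ q₂ ρ₁ ρ₂ *ᵥ ν₂))
    {M₀ M₁ M₂ : Matrix (Fin 2) (Fin 2) ℂ} (hM : IsPOVM M₀ M₁ M₂) :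
    PbarCor C₁ q₁ q₂ ρ₁ ρ₂ M₀ M₁ M₂ ≤ ρ11 * C₁ + ρ22 * C₂ := by
  set ρbar₁ : Matrix (Fin 2) (Fin 2) ℂ := (C₁ : ℂ) • vecMulVec ν₁ (star ν₁)
    + ((1 - C₂ : ℝ) : ℂ) • vecMulVec ν₂ (star ν₂)
  set ρbar₂ : Matrix (Fin 2) (Fin 2) ℂ := ((1 - C₁ : ℝ) : ℂ) • vecMulVec ν₁ (star ν₁)
    + (C₂ : ℂ) • vecMulVec ν₂ (star ν₂)
  set Λ : Matrix (Fin 2) (Fin 2) ℂ := (C₁ : ℂ) • vecMulVec ν₁ (star ν₁)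
    + (C₂ : ℂ) • vecMulVec ν₂ (star ν₂)
  have hΛ₀ : (C₁ : ℂ) • (1 : Matrix (Fin 2) (Fin 2) ℂ) ≤ Λ := by
    rw [← vecMulVec_add_vecMulVec_eq_one hν₁ hν₂ hν₁₂, smul_add]
    exact smul_vecMulVec_add_smul_vecMulVec_le le_rfl hC₁₂ ν₁ ν₂
  have hΛ₁ : ρbar₁ ≤ Λ := smul_vecMulVec_add_smul_vecMulVec_le le_rfl (by linarith) ν₁ ν₂
  have hΛ₂ : ρbar₂ ≤ Λ := smul_vecMulVec_add_smul_vecMulVec_le (by linarith) le_rfl ν₁ ν₂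
  have hconj : ∀ {X}, X ≤ Λ → S * X * S ≤ S * Λ * S :=
    fun h => hS.isSelfAdjoint.conjugate_le_conjugate h
  calc PbarCor C₁ q₁ q₂ ρ₁ ρ₂ M₀ M₁ M₂
      = ((S * ((C₁ : ℂ) • 1) * S) * M₀).trace.re + ((S * ρbar₁ * S) * M₁).trace.re
        + ((S * ρbar₂ * S) * M₂).trace.re := by
        rw [pbarCor_eq_sum_re_trace, hbar₁, hbar₂, Matrix.mul_smul, Matrix.mul_one,
          Matrix.smul_mul _ S S, hSS]
    _ ≤ (S * Λ * S).trace.re := hM.sum_re_trace_mul_le (hconj hΛ₀) (hconj hΛ₁) (hconj hΛ₂)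
    _ = ρ11 * C₁ + ρ22 * C₂ := by
        rw [Matrix.mul_assoc, trace_mul_comm, Matrix.mul_assoc, hSS, Matrix.add_mul,
          Matrix.smul_mul, Matrix.smul_mul, trace_add, trace_smul, trace_smul,
          trace_vecMulVec_mul, trace_vecMulVec_mul, ← h11, ← h22]
        simp only [smul_eq_mul, Complex.add_re, Complex.re_ofReal_mul, Complex.ofReal_re]
        ring

theorem exists_isPOVM_pbarCor_eq (hρ0 : (rho0 q₁ q₂ ρ₁ ρ₂).PosDef) (hS : S.IsHermitian)
    (hSS : S * S = rho0 q₁ q₂ ρ₁ ρ₂)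
    (hν₁ : star ν₁ ⬝ᵥ ν₁ = 1) (hν₂ : star ν₂ ⬝ᵥ ν₂ = 1) (hν₁₂ : star ν₁ ⬝ᵥ ν₂ = 0)
    (hbar₁ : S * ((C₁ : ℂ) • vecMulVec ν₁ (star ν₁)
        + ((1 - C₂ : ℝ) : ℂ) • vecMulVec ν₂ (star ν₂)) * S = (q₁ : ℂ) • ρ₁)
    (hbar₂ : S * (((1 - C₁ : ℝ) : ℂ) • vecMulVec ν₁ (star ν₁)
        + (C₂ : ℂ) • vecMulVec ν₂ (star ν₂)) * S = (q₂ : ℂ) • ρ₂)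
    (h11 : (ρ11 : ℂ) = star ν₁ ⬝ᵥ (rho0 q₁ q₂ ρ₁ ρ₂ *ᵥ ν₁))
    (h22 : (ρ22 : ℂ) = star ν₂ ⬝ᵥ (rho0 q₁ q₂ ρ₁ ρ₂ *ᵥ ν₂))
    (h12 : star ν₁ ⬝ᵥ (rho0 q₁ q₂ ρ₁ ρ₂ *ᵥ ν₂) = 0) :
    ∃ M₀ M₁ M₂, IsPOVM M₀ M₁ M₂ ∧ PbarCor C₁ q₁ q₂ ρ₁ ρ₂ M₀ M₁ M₂ = ρ11 * C₁ + ρ22 * C₂ := by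
  have hP := vecMulVec_add_vecMulVec_eq_one hν₁ hν₂ hν₁₂
  have hν₂₁ : star ν₂ ⬝ᵥ ν₁ = 0 := by rw [star_dotProduct, hν₁₂, star_zero]
  have hdet : IsUnit S.det :=
    (isUnit_iff_isUnit_det S).mp (isUnit_of_mul_isUnit_left (hSS ▸ hρ0.isUnit))
  have hρ0_eq : rho0 q₁ q₂ ρ₁ ρ₂ = (ρ11 : ℂ) • vecMulVec ν₁ (star ν₁)
      + (ρ22 : ℂ) • vecMulVec ν₂ (star ν₂) := by
    rw [h11, h22]
    exact eq_smul_add_smul_of_dotProduct_mulVec_eq_zero hρ0.isHermitian hP h12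
  have hM : ∀ (ν : Fin 2 → ℂ) {r : ℂ}, 0 ≤ r →
      (r • (S⁻¹ * vecMulVec ν (star ν) * S⁻¹)).PosSemidef := fun ν _ hr =>
    (hS.inv.isSelfAdjoint.conjugate_nonneg
      (posSemidef_vecMulVec_self_star ν).nonneg).posSemidef.smul hr
  refine ⟨0, (ρ11 : ℂ) • (S⁻¹ * vecMulVec ν₁ (star ν₁) * S⁻¹),
    (ρ22 : ℂ) • (S⁻¹ * vecMulVec ν₂ (star ν₂) * S⁻¹),
    ⟨.zero, hM ν₁ (h11 ▸ hρ0.posSemidef.dotProduct_mulVec_nonneg ν₁),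
      hM ν₂ (h22 ▸ hρ0.posSemidef.dotProduct_mulVec_nonneg ν₂), ?_⟩, ?_⟩
  · calc 0 + (ρ11 : ℂ) • (S⁻¹ * vecMulVec ν₁ (star ν₁) * S⁻¹)
          + (ρ22 : ℂ) • (S⁻¹ * vecMulVec ν₂ (star ν₂) * S⁻¹)
        = S⁻¹ * (S * S) * S⁻¹ := by
          rw [hSS, hρ0_eq, zero_add, Matrix.mul_add, Matrix.add_mul, Matrix.mul_smul,
            Matrix.mul_smul, Matrix.smul_mul, Matrix.smul_mul]
      _ = 1 := by
          rw [← Matrix.mul_assoc, nonsing_inv_mul S hdet, Matrix.one_mul,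
            mul_nonsing_inv S hdet]
  · rw [pbarCor_eq_sum_re_trace, ← hbar₁, ← hbar₂, Matrix.mul_zero, trace_zero, Matrix.mul_smul,
      Matrix.mul_smul, trace_smul, trace_smul, trace_conj_mul_conj_inv hdet,
      trace_conj_mul_conj_inv hdet, trace_smul_add_smul_mul_vecMulVec hν₁ hν₂₁,
      add_comm (((1 - C₁ : ℝ) : ℂ) • _), trace_smul_add_smul_mul_vecMulVec hν₂ hν₁₂]
    simp only [smul_eq_mul, Complex.zero_re, zero_add, Complex.re_ofReal_mul, Complex.ofReal_re]

end TwoStates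

theorem stmt11_general
    (q₁ q₂ : ℝ) (ρ₁ ρ₂ : Matrix (Fin 2) (Fin 2) ℂ)
    (hρ0 : (rho0 q₁ q₂ ρ₁ ρ₂).PosDef)
    (S : Matrix (Fin 2) (Fin 2) ℂ) (hS : S.PosSemidef) (hSS : S * S = rho0 q₁ q₂ ρ₁ ρ₂)
    (ν₁ ν₂ : Fin 2 → ℂ)
    (hν₁ : star ν₁ ⬝ᵥ ν₁ = 1) (hν₂ : star ν₂ ⬝ᵥ ν₂ = 1) (hν₁₂ : star ν₁ ⬝ᵥ ν₂ = 0)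
    (C₁ C₂ : ℝ) (hC12 : C₁ ≤ C₂)
    (hbar₁ : S * ((C₁ : ℂ) • vecMulVec ν₁ (star ν₁)
        + ((1 - C₂ : ℝ) : ℂ) • vecMulVec ν₂ (star ν₂)) * S = (q₁ : ℂ) • ρ₁)
    (hbar₂ : S * (((1 - C₁ : ℝ) : ℂ) • vecMulVec ν₁ (star ν₁)
        + (C₂ : ℂ) • vecMulVec ν₂ (star ν₂)) * S = (q₂ : ℂ) • ρ₂)
    (ρ11 ρ22 : ℝ) (ρ12 : ℂ)
    (h11 : (ρ11 : ℂ) = star ν₁ ⬝ᵥ (rho0 q₁ q₂ ρ₁ ρ₂ *ᵥ ν₁))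
    (h22 : (ρ22 : ℂ) = star ν₂ ⬝ᵥ (rho0 q₁ q₂ ρ₁ ρ₂ *ᵥ ν₂))
    (h12 : ρ12 = star ν₁ ⬝ᵥ (rho0 q₁ q₂ ρ₁ ρ₂ *ᵥ ν₂))
    (hC₁ : 1 / 2 < C₁) (h12z : ρ12 = 0) :
    ∀ Q ∈ PIset C₁ q₁ q₂ ρ₁ ρ₂, Q < 1 →
      PcorOpt Q q₁ q₂ ρ₁ ρ₂ = ρ11 * C₁ + ρ22 * C₂ - C₁ * Q := by
  have hbound : ∀ M₀ M₁ M₂, IsPOVM M₀ M₁ M₂ →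
      PbarCor C₁ q₁ q₂ ρ₁ ρ₂ M₀ M₁ M₂ ≤ ρ11 * C₁ + ρ22 * C₂ := fun _ _ _ hM =>
    pbarCor_le hS.isHermitian hSS hν₁ hν₂ hν₁₂ hC12 hC₁ hbar₁ hbar₂ h11 h22 hM
  obtain ⟨M₀, M₁, M₂, hM, hval⟩ := exists_isPOVM_pbarCor_eq hρ0 hS.isHermitian hSS
    hν₁ hν₂ hν₁₂ hbar₁ hbar₂ h11 h22 (h12.symm.trans h12z)
  have hopt : PbarOpt C₁ q₁ q₂ ρ₁ ρ₂ = ρ11 * C₁ + ρ22 * C₂ :=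
    IsGreatest.csSup_eq ⟨⟨M₀, M₁, M₂, hM, hval⟩, by
      rintro _ ⟨N₀, N₁, N₂, hN, rfl⟩
      exact hbound N₀ N₁ N₂ hN⟩
  intro Q hQ _
  rw [pcorOpt_eq_of_mem_PIset (fun N₀ N₁ N₂ hN => (hbound N₀ N₁ N₂ hN).trans_eq hopt.symm) hQ,
    hopt]

/-- If `1/2 < C₁ ≤ C₂` and `ρ₁₂ = 0`, then for every
`Q ∈ P_I(C₁)` with `Q < 1`, `P_cor^opt(Q) = ρ₁₁C₁ + ρ₂₂C₂ − C₁Q`, i.e.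
`R_cor^opt(Q) = C₁ + ρ₂₂(C₂−C₁)/(1−Q)`. -/
theorem stmt11
    (q₁ q₂ : ℝ) (ρ₁ ρ₂ : Matrix (Fin 2) (Fin 2) ℂ)
    (hq₁ : 0 < q₁) (hq₂ : 0 < q₂) (hq : q₁ + q₂ = 1)
    (hρ₁ : ρ₁.PosSemidef) (htr₁ : ρ₁.trace = 1)
    (hρ₂ : ρ₂.PosSemidef) (htr₂ : ρ₂.trace = 1)
    (hρ0 : (rho0 q₁ q₂ ρ₁ ρ₂).PosDef)
    (S : Matrix (Fin 2) (Fin 2) ℂ) (hS : S.PosSemidef) (hSS : S * S = rho0 q₁ q₂ ρ₁ ρ₂)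
    (ν₁ ν₂ : Fin 2 → ℂ)
    (hν₁ : star ν₁ ⬝ᵥ ν₁ = 1) (hν₂ : star ν₂ ⬝ᵥ ν₂ = 1) (hν₁₂ : star ν₁ ⬝ᵥ ν₂ = 0)
    (C₁ C₂ : ℝ) (hC12 : C₁ ≤ C₂) (hCsum : 1 < C₁ + C₂)
    (hbar₁ : S * ((C₁ : ℂ) • vecMulVec ν₁ (star ν₁)
        + ((1 - C₂ : ℝ) : ℂ) • vecMulVec ν₂ (star ν₂)) * S = (q₁ : ℂ) • ρ₁)
    (hbar₂ : S * (((1 - C₁ : ℝ) : ℂ) • vecMulVec ν₁ (star ν₁)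
        + (C₂ : ℂ) • vecMulVec ν₂ (star ν₂)) * S = (q₂ : ℂ) • ρ₂)
    (ρ11 ρ22 : ℝ) (ρ12 : ℂ)
    (h11 : (ρ11 : ℂ) = star ν₁ ⬝ᵥ (rho0 q₁ q₂ ρ₁ ρ₂ *ᵥ ν₁))
    (h22 : (ρ22 : ℂ) = star ν₂ ⬝ᵥ (rho0 q₁ q₂ ρ₁ ρ₂ *ᵥ ν₂))
    (h12 : ρ12 = star ν₁ ⬝ᵥ (rho0 q₁ q₂ ρ₁ ρ₂ *ᵥ ν₂))
    (hC₁ : 1 / 2 < C₁) (h12z : ρ12 = 0) :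
    ∀ Q ∈ PIset C₁ q₁ q₂ ρ₁ ρ₂, Q < 1 →
      PcorOpt Q q₁ q₂ ρ₁ ρ₂ = ρ11 * C₁ + ρ22 * C₂ - C₁ * Q :=
  stmt11_general q₁ q₂ ρ₁ ρ₂ hρ0 S hS hSS ν₁ ν₂ hν₁ hν₂ hν₁₂ C₁ C₂ hC12 hbar₁ hbar₂ ρ11 ρ22 ρ12 h11
    h22 h12 hC₁ h12z

end FRIR
end
end

section
/- Suppose C_1 < C_2, ρ_{12} = 0, and q_0^{(0)} < q < q_0^{(1)}. Then every POVM (M_0,M_1,M_2) attaining P̄_cor = P̄_cor^opt(q) satisfies ρ_0^{1/2}M_0ρ_0^{1/2} = ρ_{11}|ν_1⟩⟨ν_1|, M_1 = 0 and ρ_0^{1/2}M_2ρ_0^{1/2} = ρ_{22}|ν_2⟩⟨ν_2|; in particular the optimal POVM is unique and P_I(q) = {ρ_{11}}. -/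
open Matrix ComplexOrder

noncomputable section

namespace Matrix

variable {𝕜 n : Type*} [RCLike 𝕜] [Fintype n]

theorem trace_vecMulVec_mul (u v : n → 𝕜) (A : Matrix n n 𝕜) :
    (vecMulVec u v * A).trace = v ⬝ᵥ (A *ᵥ u) := by
  rw [vecMulVec_mul, trace_vecMulVec, dotProduct_comm, dotProduct_mulVec]

theorem vecMulVec_mul_mul_vecMulVec (u v w x : n → 𝕜) (A : Matrix n n 𝕜) :
    vecMulVec u v * A * vecMulVec w x = (v ⬝ᵥ (A *ᵥ w)) • vecMulVec u x := by
  rw [Matrix.mul_assoc, mul_vecMulVec, vecMulVec_mul_vecMulVec, vecMulVec_smul]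

theorem trace_smul_vecMulVec_add_smul_vecMulVec_mul (u w : n → 𝕜) (c d : 𝕜)
    (A : Matrix n n 𝕜) :
    ((c • vecMulVec u (star u) + d • vecMulVec w (star w)) * A).trace
      = c * (star u ⬝ᵥ (A *ᵥ u)) + d * (star w ⬝ᵥ (A *ᵥ w)) := by
  rw [Matrix.add_mul, trace_add, Matrix.smul_mul, Matrix.smul_mul, trace_smul, trace_smul,
    trace_vecMulVec_mul, trace_vecMulVec_mul, smul_eq_mul, smul_eq_mul]

theorem star_dotProduct_smul_vecMulVec_add_mulVec {u w : n → 𝕜} (hu : star u ⬝ᵥ u = 1)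
    (huw : star u ⬝ᵥ w = 0) (c d : 𝕜) :
    star u ⬝ᵥ ((c • vecMulVec u (star u) + d • vecMulVec w (star w)) *ᵥ u) = c := by
  have hwu : star w ⬝ᵥ u = 0 := by rw [star_dotProduct, huw, star_zero]
  simp [add_mulVec, smul_mulVec, vecMulVec_mulVec, hu, hwu]

theorem vecMulVec_add_vecMulVec_eq_one {u w : Fin 2 → 𝕜}
    (hu : star u ⬝ᵥ u = 1) (hw : star w ⬝ᵥ w = 1) (huw : star u ⬝ᵥ w = 0) :
    vecMulVec u (star u) + vecMulVec w (star w) = 1 := by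
  have hwu : star w ⬝ᵥ u = 0 := by rw [star_dotProduct, huw, star_zero]
  let V : Matrix (Fin 2) (Fin 2) 𝕜 := of fun i j => ![u, w] j i
  have hVV : Vᴴ * V = 1 := by
    ext i j
    fin_cases i <;> fin_cases j <;>
      simp [V, mul_apply, dotProduct] at hu hw huw hwu ⊢ <;> assumption
  calc vecMulVec u (star u) + vecMulVec w (star w) = V * Vᴴ := by
        ext i j
        simp [V, mul_apply, vecMulVec_apply]
    _ = 1 := mul_eq_one_comm.mp hVV

theorem exists_posSemidef_mul_mul_eq [DecidableEq n] {S N : Matrix n n 𝕜} (hS : S.IsHermitian)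
    (hdet : IsUnit S.det) (hN : N.PosSemidef) :
    ∃ M : Matrix n n 𝕜, M.PosSemidef ∧ S * M * S = N := by
  refine ⟨S⁻¹ * N * S⁻¹, ?_, ?_⟩
  · simpa [conjTranspose_nonsing_inv, hS.eq] using hN.conjTranspose_mul_mul_same S⁻¹
  · rw [← Matrix.mul_assoc, ← Matrix.mul_assoc, mul_nonsing_inv S hdet, Matrix.one_mul,
      Matrix.mul_assoc, nonsing_inv_mul S hdet, Matrix.mul_one]

variable [DecidableEq n] {u w : n → 𝕜}

theorem trace_eq_of_vecMulVec_add_eq_one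
    (hone : vecMulVec u (star u) + vecMulVec w (star w) = 1) (A : Matrix n n 𝕜) :
    A.trace = star u ⬝ᵥ (A *ᵥ u) + star w ⬝ᵥ (A *ᵥ w) := by
  simpa [hone] using trace_smul_vecMulVec_add_smul_vecMulVec_mul u w 1 1 A

theorem eq_of_vecMulVec_add_eq_one
    (hone : vecMulVec u (star u) + vecMulVec w (star w) = 1) (A : Matrix n n 𝕜) :
    A = (star u ⬝ᵥ (A *ᵥ u)) • vecMulVec u (star u) + (star u ⬝ᵥ (A *ᵥ w)) • vecMulVec u (star w)
      + (star w ⬝ᵥ (A *ᵥ u)) • vecMulVec w (star u)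
      + (star w ⬝ᵥ (A *ᵥ w)) • vecMulVec w (star w) := by
  calc A = (vecMulVec u (star u) + vecMulVec w (star w)) * A
        * (vecMulVec u (star u) + vecMulVec w (star w)) := by
        rw [hone, Matrix.one_mul, Matrix.mul_one]
    _ = _ := by
        simp only [Matrix.add_mul, Matrix.mul_add, vecMulVec_mul_mul_vecMulVec]
        abel

theorem IsHermitian.eq_of_star_dotProduct_mulVec_eq_zero {A : Matrix n n 𝕜}
    (hA : A.IsHermitian) (hone : vecMulVec u (star u) + vecMulVec w (star w) = 1)
    (h : star u ⬝ᵥ (A *ᵥ w) = 0) :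
    A = (star u ⬝ᵥ (A *ᵥ u)) • vecMulVec u (star u)
      + (star w ⬝ᵥ (A *ᵥ w)) • vecMulVec w (star w) := by
  have h' : star w ⬝ᵥ (A *ᵥ u) = 0 := by
    rw [star_dotProduct, star_mulVec, hA.eq, ← dotProduct_mulVec, h, star_zero]
  conv_lhs => rw [eq_of_vecMulVec_add_eq_one hone A, h, h', zero_smul, zero_smul, add_zero,
    add_zero]

theorem PosSemidef.eq_smul_of_star_dotProduct_mulVec_eq_zero {A : Matrix n n 𝕜}
    (hA : A.PosSemidef) (hone : vecMulVec u (star u) + vecMulVec w (star w) = 1)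
    (h : star w ⬝ᵥ (A *ᵥ w) = 0) :
    A = (star u ⬝ᵥ (A *ᵥ u)) • vecMulVec u (star u) := by
  have hw : A *ᵥ w = 0 := (hA.dotProduct_mulVec_zero_iff w).mp h
  have := hA.isHermitian.eq_of_star_dotProduct_mulVec_eq_zero hone (by rw [hw, dotProduct_zero])
  rwa [hw, dotProduct_zero, zero_smul, add_zero] at this

end Matrix

namespace FRIR

def objective (q C₁ C₂ a₀ a₁ a₂ b₀ b₁ b₂ : ℝ) : ℝ :=
  q * (a₀ + b₀) + (C₁ * a₁ + (1 - C₂) * b₁) + ((1 - C₁) * a₂ + C₂ * b₂)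

section Objective

variable {q C₁ C₂ a₀ a₁ a₂ b₀ b₁ b₂ : ℝ}

theorem objective_le {α β : ℝ} (ha₀ : 0 ≤ a₀) (ha₁ : 0 ≤ a₁) (ha₂ : 0 ≤ a₂) (hb₀ : 0 ≤ b₀)
    (hb₁ : 0 ≤ b₁) (hb₂ : 0 ≤ b₂) (hαq : q ≤ α) (hαC : C₁ ≤ α) (hα : 1 - C₁ ≤ α)
    (hβq : q ≤ β) (hβ : 1 - C₂ ≤ β) (hβC : C₂ ≤ β) :
    objective q C₁ C₂ a₀ a₁ a₂ b₀ b₁ b₂ ≤ α * (a₀ + a₁ + a₂) + β * (b₀ + b₁ + b₂) := by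
  unfold objective
  linarith [mul_le_mul_of_nonneg_right hαq ha₀, mul_le_mul_of_nonneg_right hαC ha₁,
    mul_le_mul_of_nonneg_right hα ha₂, mul_le_mul_of_nonneg_right hβq hb₀,
    mul_le_mul_of_nonneg_right hβ hb₁, mul_le_mul_of_nonneg_right hβC hb₂]

theorem eq_zero_of_objective_eq (ha₁ : 0 ≤ a₁) (ha₂ : 0 ≤ a₂) (hb₀ : 0 ≤ b₀) (hb₁ : 0 ≤ b₁)
    (hC₁ : C₁ < q) (hC₁' : 1 - C₁ < q) (hC₂ : q < C₂) (hC₂' : 1 - C₂ < C₂)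
    (h : objective q C₁ C₂ a₀ a₁ a₂ b₀ b₁ b₂ = q * (a₀ + a₁ + a₂) + C₂ * (b₀ + b₁ + b₂)) :
    a₁ = 0 ∧ a₂ = 0 ∧ b₀ = 0 ∧ b₁ = 0 := by
  unfold objective at h
  have t₁ := mul_nonneg (sub_nonneg.2 hC₁.le) ha₁
  have t₂ := mul_nonneg (sub_nonneg.2 hC₁'.le) ha₂
  have t₃ := mul_nonneg (sub_nonneg.2 hC₂.le) hb₀
  have t₄ := mul_nonneg (sub_nonneg.2 hC₂'.le) hb₁
  refine ⟨?_, ?_, ?_, ?_⟩ <;> nlinarith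

end Objective

def weight {n : Type*} [Fintype n] (S M : Matrix n n ℂ) (u : n → ℂ) : ℝ :=
  (star u ⬝ᵥ ((S * M * S) *ᵥ u)).re

section Weight

variable {n : Type*} [Fintype n] {S M : Matrix n n ℂ}

theorem weight_nonneg (hS : S.IsHermitian) (hM : M.PosSemidef) (u : n → ℂ) :
    0 ≤ weight S M u := by
  have h := (hS.eq ▸ hM.conjTranspose_mul_mul_same S).dotProduct_mulVec_nonneg u
  exact (Complex.nonneg_iff.mp h).1

theorem ofReal_weight (hS : S.IsHermitian) (hM : M.PosSemidef) (u : n → ℂ) :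
    (weight S M u : ℂ) = star u ⬝ᵥ ((S * M * S) *ᵥ u) := by
  have h := (hS.eq ▸ hM.conjTranspose_mul_mul_same S).dotProduct_mulVec_nonneg u
  exact Complex.ext (Complex.ofReal_re _) ((Complex.ofReal_im _).trans (Complex.nonneg_iff.mp h).2)

theorem re_trace_mul_mul_mul (u w : n → ℂ) (c d : ℝ) (M : Matrix n n ℂ) :
    (S * ((c : ℂ) • vecMulVec u (star u) + (d : ℂ) • vecMulVec w (star w)) * S * M).trace.re
      = c * weight S M u + d * weight S M w := by
  rw [Matrix.mul_assoc, trace_mul_cycle, trace_mul_comm,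
    trace_smul_vecMulVec_add_smul_vecMulVec_mul]
  simp [weight, Complex.add_re]

theorem weight_add_weight_add_weight {M₀ M₁ M₂ : Matrix n n ℂ} [DecidableEq n]
    (hsum : M₀ + M₁ + M₂ = 1) (u : n → ℂ) :
    weight S M₀ u + weight S M₁ u + weight S M₂ u = (star u ⬝ᵥ ((S * S) *ᵥ u)).re := by
  simp only [weight, ← Complex.add_re, ← dotProduct_add, ← add_mulVec, ← Matrix.mul_add,
    ← Matrix.add_mul, hsum, Matrix.mul_one]

theorem mul_mul_eq_smul_of_weight_eq_zero [DecidableEq n] {u w : n → ℂ} (hS : S.IsHermitian)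
    (hM : M.PosSemidef) (hone : vecMulVec u (star u) + vecMulVec w (star w) = 1)
    (h : weight S M w = 0) : S * M * S = (weight S M u : ℂ) • vecMulVec u (star u) := by
  rw [ofReal_weight hS hM]
  refine (hS.eq ▸ hM.conjTranspose_mul_mul_same S).eq_smul_of_star_dotProduct_mulVec_eq_zero hone ?_
  rw [← ofReal_weight hS hM, h, Complex.ofReal_zero]

end Weight

theorem isPOVM_one_zero_zero : IsPOVM 1 0 0 :=
  ⟨PosSemidef.one, PosSemidef.zero, PosSemidef.zero, by rw [add_zero, add_zero]⟩

section Optimum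

variable {q q₁ q₂ B : ℝ} {ρ₁ ρ₂ M₀ M₁ M₂ : Matrix (Fin 2) (Fin 2) ℂ}

theorem pbarOpt_eq_of_le
    (hle : ∀ M₀ M₁ M₂, IsPOVM M₀ M₁ M₂ → PbarCor q q₁ q₂ ρ₁ ρ₂ M₀ M₁ M₂ ≤ B)
    (hP : IsPOVM M₀ M₁ M₂) (hB : PbarCor q q₁ q₂ ρ₁ ρ₂ M₀ M₁ M₂ = B) :
    PbarOpt q q₁ q₂ ρ₁ ρ₂ = B :=
  IsGreatest.csSup_eq ⟨⟨M₀, M₁, M₂, hP, hB⟩, by rintro _ ⟨M₀, M₁, M₂, hP, rfl⟩; exact hle _ _ _ hP⟩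

theorem pbarCor_le_pbarOpt
    (hle : ∀ M₀ M₁ M₂, IsPOVM M₀ M₁ M₂ → PbarCor q q₁ q₂ ρ₁ ρ₂ M₀ M₁ M₂ ≤ B)
    (hP : IsPOVM M₀ M₁ M₂) : PbarCor q q₁ q₂ ρ₁ ρ₂ M₀ M₁ M₂ ≤ PbarOpt q q₁ q₂ ρ₁ ρ₂ :=
  le_csSup ⟨B, by rintro _ ⟨M₀, M₁, M₂, hP, rfl⟩; exact hle _ _ _ hP⟩ ⟨M₀, M₁, M₂, hP, rfl⟩

theorem pIof_mem_pIset_of_le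
    (hle : ∀ M₀ M₁ M₂, IsPOVM M₀ M₁ M₂ → PbarCor q q₁ q₂ ρ₁ ρ₂ M₀ M₁ M₂ ≤ B)
    (hP : IsPOVM M₀ M₁ M₂) (hB : PbarCor q q₁ q₂ ρ₁ ρ₂ M₀ M₁ M₂ = B) :
    PIof q₁ q₂ ρ₁ ρ₂ M₀ ∈ PIset q q₁ q₂ ρ₁ ρ₂ :=
  ⟨M₀, M₁, M₂, hP, hB.trans (pbarOpt_eq_of_le hle hP hB).symm, rfl⟩

end Optimum

/-- The hypotheses of the theorem, read in the eigenframe `ν₁, ν₂` with `S = ρ₀^½`;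
`rho0_eq` is how `ρ₁₂ = 0` enters. -/
structure EigenFrame (q₁ q₂ : ℝ) (ρ₁ ρ₂ S : Matrix (Fin 2) (Fin 2) ℂ) (ν₁ ν₂ : Fin 2 → ℂ)
    (C₁ C₂ ρ11 ρ22 : ℝ) : Prop where
  isHermitian : S.IsHermitian
  isUnit_det : IsUnit S.det
  mul_self : S * S = rho0 q₁ q₂ ρ₁ ρ₂
  norm₁ : star ν₁ ⬝ᵥ ν₁ = 1
  norm₂ : star ν₂ ⬝ᵥ ν₂ = 1
  orth : star ν₁ ⬝ᵥ ν₂ = 0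
  bar₁ : S * ((C₁ : ℂ) • vecMulVec ν₁ (star ν₁)
    + ((1 - C₂ : ℝ) : ℂ) • vecMulVec ν₂ (star ν₂)) * S = (q₁ : ℂ) • ρ₁
  bar₂ : S * (((1 - C₁ : ℝ) : ℂ) • vecMulVec ν₁ (star ν₁)
    + (C₂ : ℂ) • vecMulVec ν₂ (star ν₂)) * S = (q₂ : ℂ) • ρ₂
  rho0_eq : rho0 q₁ q₂ ρ₁ ρ₂
    = (ρ11 : ℂ) • vecMulVec ν₁ (star ν₁) + (ρ22 : ℂ) • vecMulVec ν₂ (star ν₂)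
  ρ11_nonneg : 0 ≤ ρ11
  ρ22_nonneg : 0 ≤ ρ22
  ρ11_add_ρ22 : ρ11 + ρ22 = 1

namespace EigenFrame

variable {q₁ q₂ C₁ C₂ ρ11 ρ22 : ℝ} {ρ₁ ρ₂ S : Matrix (Fin 2) (Fin 2) ℂ} {ν₁ ν₂ : Fin 2 → ℂ}
  (hF : EigenFrame q₁ q₂ ρ₁ ρ₂ S ν₁ ν₂ C₁ C₂ ρ11 ρ22)
include hF

theorem vecMulVec_add_eq_one : vecMulVec ν₁ (star ν₁) + vecMulVec ν₂ (star ν₂) = 1 :=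
  vecMulVec_add_vecMulVec_eq_one hF.norm₁ hF.norm₂ hF.orth

theorem weight_add_weight_add_weight₁ {M₀ M₁ M₂ : Matrix (Fin 2) (Fin 2) ℂ}
    (hsum : M₀ + M₁ + M₂ = 1) :
    weight S M₀ ν₁ + weight S M₁ ν₁ + weight S M₂ ν₁ = ρ11 := by
  rw [weight_add_weight_add_weight hsum, hF.mul_self, hF.rho0_eq,
    star_dotProduct_smul_vecMulVec_add_mulVec hF.norm₁ hF.orth, Complex.ofReal_re]

theorem weight_add_weight_add_weight₂ {M₀ M₁ M₂ : Matrix (Fin 2) (Fin 2) ℂ}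
    (hsum : M₀ + M₁ + M₂ = 1) :
    weight S M₀ ν₂ + weight S M₁ ν₂ + weight S M₂ ν₂ = ρ22 := by
  have hν₂₁ : star ν₂ ⬝ᵥ ν₁ = 0 := by rw [star_dotProduct, hF.orth, star_zero]
  rw [weight_add_weight_add_weight hsum, hF.mul_self, hF.rho0_eq, add_comm,
    star_dotProduct_smul_vecMulVec_add_mulVec hF.norm₂ hν₂₁, Complex.ofReal_re]

theorem pIof_eq (M₀ : Matrix (Fin 2) (Fin 2) ℂ) :
    PIof q₁ q₂ ρ₁ ρ₂ M₀ = weight S M₀ ν₁ + weight S M₀ ν₂ := by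
  have h := re_trace_mul_mul_mul (S := S) ν₁ ν₂ 1 1 M₀
  rwa [Complex.ofReal_one, one_smul, one_smul, hF.vecMulVec_add_eq_one, Matrix.mul_one,
    hF.mul_self, one_mul, one_mul] at h

theorem pbarCor_eq (q : ℝ) (M₀ M₁ M₂ : Matrix (Fin 2) (Fin 2) ℂ) :
    PbarCor q q₁ q₂ ρ₁ ρ₂ M₀ M₁ M₂ = objective q C₁ C₂
      (weight S M₀ ν₁) (weight S M₁ ν₁) (weight S M₂ ν₁)
      (weight S M₀ ν₂) (weight S M₁ ν₂) (weight S M₂ ν₂) := by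
  have h₁ := re_trace_mul_mul_mul (S := S) ν₁ ν₂ C₁ (1 - C₂) M₁
  have h₂ := re_trace_mul_mul_mul (S := S) ν₁ ν₂ (1 - C₁) C₂ M₂
  rw [hF.bar₁, Matrix.smul_mul, trace_smul, smul_eq_mul, Complex.re_ofReal_mul] at h₁
  rw [hF.bar₂, Matrix.smul_mul, trace_smul, smul_eq_mul, Complex.re_ofReal_mul] at h₂
  rw [PbarCor, Pcor, h₁, h₂, hF.pIof_eq, objective]
  ring

theorem eq_of_mul_mul_eq {X Y : Matrix (Fin 2) (Fin 2) ℂ} (h : S * X * S = S * Y * S) : X = Y :=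
  have hS : IsUnit S := (isUnit_iff_isUnit_det S).mpr hF.isUnit_det
  hS.mul_left_cancel (hS.mul_right_cancel h)

theorem weight_eq_of_mul_mul_eq {M : Matrix (Fin 2) (Fin 2) ℂ} {a b : ℝ}
    (h : S * M * S = (a : ℂ) • vecMulVec ν₁ (star ν₁) + (b : ℂ) • vecMulVec ν₂ (star ν₂)) :
    weight S M ν₁ = a ∧ weight S M ν₂ = b := by
  have hν₂₁ : star ν₂ ⬝ᵥ ν₁ = 0 := by rw [star_dotProduct, hF.orth, star_zero]
  refine ⟨?_, ?_⟩ <;> rw [weight, h]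
  · rw [star_dotProduct_smul_vecMulVec_add_mulVec hF.norm₁ hF.orth, Complex.ofReal_re]
  · rw [add_comm, star_dotProduct_smul_vecMulVec_add_mulVec hF.norm₂ hν₂₁, Complex.ofReal_re]

theorem pIof_one : PIof q₁ q₂ ρ₁ ρ₂ 1 = 1 := by
  have h₁ := hF.weight_add_weight_add_weight₁ (M₀ := 1) (M₁ := 0) (M₂ := 0) (by simp)
  have h₂ := hF.weight_add_weight_add_weight₂ (M₀ := 1) (M₁ := 0) (M₂ := 0) (by simp)
  simp only [weight, Matrix.mul_zero, Matrix.zero_mul, zero_mulVec, dotProduct_zero,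
    Complex.zero_re, add_zero] at h₁ h₂
  rw [hF.pIof_eq, weight, weight, h₁, h₂, hF.ρ11_add_ρ22]

theorem pbarCor_one_zero_zero (q : ℝ) : PbarCor q q₁ q₂ ρ₁ ρ₂ 1 0 0 = q := by
  simp [PbarCor, Pcor, hF.pIof_one]

theorem pbarCor_le {q α β : ℝ} {M₀ M₁ M₂ : Matrix (Fin 2) (Fin 2) ℂ} (hP : IsPOVM M₀ M₁ M₂)
    (hαq : q ≤ α) (hαC : C₁ ≤ α) (hα : 1 - C₁ ≤ α) (hβq : q ≤ β) (hβ : 1 - C₂ ≤ β)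
    (hβC : C₂ ≤ β) :
    PbarCor q q₁ q₂ ρ₁ ρ₂ M₀ M₁ M₂ ≤ α * ρ11 + β * ρ22 := by
  obtain ⟨h₀, h₁, h₂, hsum⟩ := hP
  rw [hF.pbarCor_eq, ← hF.weight_add_weight_add_weight₁ hsum,
    ← hF.weight_add_weight_add_weight₂ hsum]
  have hS := hF.isHermitian
  exact objective_le (weight_nonneg hS h₀ _) (weight_nonneg hS h₁ _) (weight_nonneg hS h₂ _)
    (weight_nonneg hS h₀ _) (weight_nonneg hS h₁ _) (weight_nonneg hS h₂ _)
    hαq hαC hα hβq hβ hβC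

theorem exists_isPOVM {a₀ a₁ a₂ b₀ b₁ b₂ : ℝ} (ha₀ : 0 ≤ a₀) (ha₁ : 0 ≤ a₁) (ha₂ : 0 ≤ a₂)
    (hb₀ : 0 ≤ b₀) (hb₁ : 0 ≤ b₁) (hb₂ : 0 ≤ b₂)
    (ha : a₀ + a₁ + a₂ = ρ11) (hb : b₀ + b₁ + b₂ = ρ22) :
    ∃ M₀ M₁ M₂, IsPOVM M₀ M₁ M₂ ∧
      (∀ q, PbarCor q q₁ q₂ ρ₁ ρ₂ M₀ M₁ M₂ = objective q C₁ C₂ a₀ a₁ a₂ b₀ b₁ b₂) ∧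
      PIof q₁ q₂ ρ₁ ρ₂ M₀ = a₀ + b₀ := by
  have hN : ∀ {a b : ℝ}, 0 ≤ a → 0 ≤ b →
      ((a : ℂ) • vecMulVec ν₁ (star ν₁) + (b : ℂ) • vecMulVec ν₂ (star ν₂)).PosSemidef :=
    fun ha hb => ((posSemidef_vecMulVec_self_star ν₁).smul (by exact_mod_cast ha)).add
      ((posSemidef_vecMulVec_self_star ν₂).smul (by exact_mod_cast hb))
  obtain ⟨M₀, hM₀, e₀⟩ := exists_posSemidef_mul_mul_eq hF.isHermitian hF.isUnit_det (hN ha₀ hb₀)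
  obtain ⟨M₁, hM₁, e₁⟩ := exists_posSemidef_mul_mul_eq hF.isHermitian hF.isUnit_det (hN ha₁ hb₁)
  obtain ⟨M₂, hM₂, e₂⟩ := exists_posSemidef_mul_mul_eq hF.isHermitian hF.isUnit_det (hN ha₂ hb₂)
  have hsum : M₀ + M₁ + M₂ = 1 := by
    refine hF.eq_of_mul_mul_eq ?_
    rw [Matrix.mul_one, hF.mul_self, hF.rho0_eq, Matrix.mul_add, Matrix.mul_add, Matrix.add_mul,
      Matrix.add_mul, e₀, e₁, e₂, ← ha, ← hb]
    push_cast
    module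
  obtain ⟨w₀, v₀⟩ := hF.weight_eq_of_mul_mul_eq e₀
  obtain ⟨w₁, v₁⟩ := hF.weight_eq_of_mul_mul_eq e₁
  obtain ⟨w₂, v₂⟩ := hF.weight_eq_of_mul_mul_eq e₂
  refine ⟨M₀, M₁, M₂, ⟨hM₀, hM₁, hM₂, hsum⟩, fun q => ?_, ?_⟩
  · rw [hF.pbarCor_eq, w₀, w₁, w₂, v₀, v₁, v₂]
  · rw [hF.pIof_eq, w₀, v₀]

theorem exists_isPOVM_diagonal : ∃ M₀ M₁ M₂, IsPOVM M₀ M₁ M₂ ∧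
    (∀ q, PbarCor q q₁ q₂ ρ₁ ρ₂ M₀ M₁ M₂ = q * ρ11 + C₂ * ρ22) ∧ PIof q₁ q₂ ρ₁ ρ₂ M₀ = ρ11 := by
  obtain ⟨M₀, M₁, M₂, hP, hval, hpi⟩ := hF.exists_isPOVM hF.ρ11_nonneg le_rfl le_rfl le_rfl le_rfl
    hF.ρ22_nonneg (by rw [add_zero, add_zero]) (by rw [zero_add, zero_add])
  refine ⟨M₀, M₁, M₂, hP, fun q => ?_, by rw [hpi, add_zero]⟩
  rw [hval, objective]
  ring

theorem pbarOpt_eq (hCsum : 1 < C₁ + C₂) {q : ℝ} (hm : max C₁ (1 - C₁) ≤ q) (hq : q ≤ C₂) :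
    PbarOpt q q₁ q₂ ρ₁ ρ₂ = q * ρ11 + C₂ * ρ22 := by
  obtain ⟨M₀, M₁, M₂, hP, hval, -⟩ := hF.exists_isPOVM_diagonal
  exact pbarOpt_eq_of_le (fun _ _ _ hP' => hF.pbarCor_le hP' le_rfl (le_max_left _ _ |>.trans hm)
    (le_max_right _ _ |>.trans hm) hq (by linarith [le_max_left C₁ (1 - C₁)]) le_rfl) hP (hval q)

theorem weights_of_pbarCor_eq_pbarOpt (hCsum : 1 < C₁ + C₂) {q : ℝ}
    (hm : max C₁ (1 - C₁) < q) (hq : q < C₂) {M₀ M₁ M₂ : Matrix (Fin 2) (Fin 2) ℂ}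
    (hP : IsPOVM M₀ M₁ M₂) (hopt : PbarCor q q₁ q₂ ρ₁ ρ₂ M₀ M₁ M₂ = PbarOpt q q₁ q₂ ρ₁ ρ₂) :
    weight S M₀ ν₁ = ρ11 ∧ weight S M₁ ν₁ = 0 ∧ weight S M₂ ν₁ = 0 ∧
      weight S M₀ ν₂ = 0 ∧ weight S M₁ ν₂ = 0 ∧ weight S M₂ ν₂ = ρ22 := by
  obtain ⟨h₀, h₁, h₂, hsum⟩ := hP
  have hs₁ := hF.weight_add_weight_add_weight₁ hsum
  have hs₂ := hF.weight_add_weight_add_weight₂ hsum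
  rw [hF.pbarOpt_eq hCsum hm.le hq.le, hF.pbarCor_eq, ← hs₁, ← hs₂] at hopt
  have hS := hF.isHermitian
  obtain ⟨ha₁, ha₂, hb₀, hb₁⟩ := eq_zero_of_objective_eq (weight_nonneg hS h₁ _)
    (weight_nonneg hS h₂ _) (weight_nonneg hS h₀ _) (weight_nonneg hS h₁ _)
    (lt_of_le_of_lt (le_max_left _ _) hm) (lt_of_le_of_lt (le_max_right _ _) hm) hq
    (by linarith [le_max_left C₁ (1 - C₁)]) hopt
  exact ⟨by linarith, ha₁, ha₂, hb₀, hb₁, by linarith⟩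

theorem mul_mul_eq_of_pbarCor_eq_pbarOpt (hCsum : 1 < C₁ + C₂) {q : ℝ}
    (hm : max C₁ (1 - C₁) < q) (hq : q < C₂) {M₀ M₁ M₂ : Matrix (Fin 2) (Fin 2) ℂ}
    (hP : IsPOVM M₀ M₁ M₂) (hopt : PbarCor q q₁ q₂ ρ₁ ρ₂ M₀ M₁ M₂ = PbarOpt q q₁ q₂ ρ₁ ρ₂) :
    S * M₀ * S = (ρ11 : ℂ) • vecMulVec ν₁ (star ν₁) ∧ M₁ = 0 ∧
      S * M₂ * S = (ρ22 : ℂ) • vecMulVec ν₂ (star ν₂) := by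
  obtain ⟨a₀, a₁, a₂, b₀, b₁, b₂⟩ := hF.weights_of_pbarCor_eq_pbarOpt hCsum hm hq hP hopt
  obtain ⟨h₀, h₁, h₂, -⟩ := hP
  have hS := hF.isHermitian
  have hone := hF.vecMulVec_add_eq_one
  have hone' : vecMulVec ν₂ (star ν₂) + vecMulVec ν₁ (star ν₁) = 1 := by rwa [add_comm]
  refine ⟨?_, hF.eq_of_mul_mul_eq ?_, ?_⟩
  · rw [mul_mul_eq_smul_of_weight_eq_zero hS h₀ hone b₀, a₀]
  · rw [mul_mul_eq_smul_of_weight_eq_zero hS h₁ hone b₁, a₁, Complex.ofReal_zero, zero_smul,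
      Matrix.mul_zero, Matrix.zero_mul]
  · rw [mul_mul_eq_smul_of_weight_eq_zero hS h₂ hone' a₂, b₂]

theorem pIset_eq (hCsum : 1 < C₁ + C₂) {q : ℝ} (hm : max C₁ (1 - C₁) < q) (hq : q < C₂) :
    PIset q q₁ q₂ ρ₁ ρ₂ = {ρ11} := by
  refine Set.eq_singleton_iff_unique_mem.2 ⟨?_, ?_⟩
  · obtain ⟨M₀, M₁, M₂, hP, hval, hpi⟩ := hF.exists_isPOVM_diagonal
    exact ⟨M₀, M₁, M₂, hP, (hval q).trans (hF.pbarOpt_eq hCsum hm.le hq.le).symm, hpi⟩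
  · rintro _ ⟨M₀, M₁, M₂, hP, hopt, rfl⟩
    obtain ⟨a₀, -, -, b₀, -⟩ := hF.weights_of_pbarCor_eq_pbarOpt hCsum hm hq hP hopt
    rw [hF.pIof_eq, a₀, b₀, add_zero]

theorem le_q0low (hC12 : C₁ ≤ C₂) (hCsum : 1 < C₁ + C₂) :
    max C₁ (1 - C₁) ≤ q0low q₁ q₂ ρ₁ ρ₂ := by
  have hm : max C₁ (1 - C₁) ≤ C₂ := max_le hC12 (by linarith)
  refine le_csSup ⟨C₂, ?_⟩ ⟨?_, ?_⟩
  · rintro x ⟨-, M₀, M₁, M₂, hP, hopt, hpi⟩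
    calc x = PbarCor x q₁ q₂ ρ₁ ρ₂ 1 0 0 := (hF.pbarCor_one_zero_zero x).symm
      _ ≤ PbarOpt x q₁ q₂ ρ₁ ρ₂ := by
          have hB : C₂ ≤ max x C₂ := le_max_right x C₂
          exact pbarCor_le_pbarOpt (fun _ _ _ hP' => hF.pbarCor_le hP' (le_max_left x C₂)
            (hC12.trans hB) (by linarith) (le_max_left x C₂) (by linarith) hB) isPOVM_one_zero_zero
      _ = PbarCor 0 q₁ q₂ ρ₁ ρ₂ M₀ M₁ M₂ := by
          rw [← hopt, PbarCor, PbarCor, hpi, mul_zero, mul_zero]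
      _ ≤ C₂ * ρ11 + C₂ * ρ22 := hF.pbarCor_le hP (by linarith) hC12 (by linarith) (by linarith)
          (by linarith) le_rfl
      _ = C₂ := by rw [← mul_add, hF.ρ11_add_ρ22, mul_one]
  · linarith [le_max_left C₁ (1 - C₁), le_max_right C₁ (1 - C₁)]
  · have hle : ∀ M₀ M₁ M₂, IsPOVM M₀ M₁ M₂ → PbarCor (max C₁ (1 - C₁)) q₁ q₂ ρ₁ ρ₂ M₀ M₁ M₂
        ≤ max C₁ (1 - C₁) * ρ11 + C₂ * ρ22 := fun _ _ _ hP =>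
      hF.pbarCor_le hP le_rfl (le_max_left _ _) (le_max_right _ _) hm (by linarith) le_rfl
    rcases max_cases C₁ (1 - C₁) with ⟨h, -⟩ | ⟨h, -⟩
    · obtain ⟨M₀, M₁, M₂, hP, hval, hpi⟩ := hF.exists_isPOVM le_rfl hF.ρ11_nonneg le_rfl le_rfl
        le_rfl hF.ρ22_nonneg (by rw [zero_add, add_zero]) (by rw [zero_add, zero_add])
      rw [add_zero] at hpi
      exact hpi ▸ pIof_mem_pIset_of_le hle hP (by rw [hval, objective, h]; ring)
    · obtain ⟨M₀, M₁, M₂, hP, hval, hpi⟩ := hF.exists_isPOVM le_rfl le_rfl hF.ρ11_nonneg le_rfl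
        le_rfl hF.ρ22_nonneg (by rw [zero_add, zero_add]) (by rw [zero_add, zero_add])
      rw [add_zero] at hpi
      exact hpi ▸ pIof_mem_pIset_of_le hle hP (by rw [hval, objective, h]; ring)

theorem q0high_le (hC12 : C₁ ≤ C₂) (hCsum : 1 < C₁ + C₂) : q0high q₁ q₂ ρ₁ ρ₂ ≤ C₂ := by
  refine csInf_le ⟨0, fun _ h => h.1.le⟩ ⟨by linarith, ?_⟩
  have h := pIof_mem_pIset_of_le (fun _ _ _ hP => hF.pbarCor_le hP le_rfl hC12 (by linarith)
    le_rfl (by linarith) le_rfl) isPOVM_one_zero_zero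
    (by rw [hF.pbarCor_one_zero_zero, ← mul_add, hF.ρ11_add_ρ22, mul_one])
  rwa [hF.pIof_one] at h

end EigenFrame

theorem trace_rho0 {q₁ q₂ : ℝ} {ρ₁ ρ₂ : Matrix (Fin 2) (Fin 2) ℂ} (hq : q₁ + q₂ = 1)
    (htr₁ : ρ₁.trace = 1) (htr₂ : ρ₂.trace = 1) : (rho0 q₁ q₂ ρ₁ ρ₂).trace = 1 := by
  rw [rho0, trace_add, trace_smul, trace_smul, htr₁, htr₂, smul_eq_mul, smul_eq_mul, mul_one,
    mul_one, ← Complex.ofReal_add, hq, Complex.ofReal_one]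

theorem stmt13_general
    (q₁ q₂ : ℝ) (ρ₁ ρ₂ : Matrix (Fin 2) (Fin 2) ℂ)
    (hq : q₁ + q₂ = 1) (htr₁ : ρ₁.trace = 1) (htr₂ : ρ₂.trace = 1)
    (hρ0 : (rho0 q₁ q₂ ρ₁ ρ₂).PosDef)
    (S : Matrix (Fin 2) (Fin 2) ℂ) (hS : S.PosSemidef) (hSS : S * S = rho0 q₁ q₂ ρ₁ ρ₂)
    (ν₁ ν₂ : Fin 2 → ℂ)
    (hν₁ : star ν₁ ⬝ᵥ ν₁ = 1) (hν₂ : star ν₂ ⬝ᵥ ν₂ = 1) (hν₁₂ : star ν₁ ⬝ᵥ ν₂ = 0)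
    (C₁ C₂ : ℝ) (hC12 : C₁ ≤ C₂) (hCsum : 1 < C₁ + C₂)
    (hbar₁ : S * ((C₁ : ℂ) • vecMulVec ν₁ (star ν₁)
        + ((1 - C₂ : ℝ) : ℂ) • vecMulVec ν₂ (star ν₂)) * S = (q₁ : ℂ) • ρ₁)
    (hbar₂ : S * (((1 - C₁ : ℝ) : ℂ) • vecMulVec ν₁ (star ν₁)
        + (C₂ : ℂ) • vecMulVec ν₂ (star ν₂)) * S = (q₂ : ℂ) • ρ₂)
    (ρ11 ρ22 : ℝ) (ρ12 : ℂ)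
    (h11 : (ρ11 : ℂ) = star ν₁ ⬝ᵥ (rho0 q₁ q₂ ρ₁ ρ₂ *ᵥ ν₁))
    (h22 : (ρ22 : ℂ) = star ν₂ ⬝ᵥ (rho0 q₁ q₂ ρ₁ ρ₂ *ᵥ ν₂))
    (h12 : ρ12 = star ν₁ ⬝ᵥ (rho0 q₁ q₂ ρ₁ ρ₂ *ᵥ ν₂))
    (h12z : ρ12 = 0)
    (q : ℝ) (hql : q0low q₁ q₂ ρ₁ ρ₂ < q) (hqh : q < q0high q₁ q₂ ρ₁ ρ₂) :
    (∀ M₀ M₁ M₂ : Matrix (Fin 2) (Fin 2) ℂ, IsPOVM M₀ M₁ M₂ →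
        PbarCor q q₁ q₂ ρ₁ ρ₂ M₀ M₁ M₂ = PbarOpt q q₁ q₂ ρ₁ ρ₂ →
        S * M₀ * S = (ρ11 : ℂ) • vecMulVec ν₁ (star ν₁) ∧ M₁ = 0 ∧
          S * M₂ * S = (ρ22 : ℂ) • vecMulVec ν₂ (star ν₂)) ∧
      PIset q q₁ q₂ ρ₁ ρ₂ = {ρ11} := by
  have hone := vecMulVec_add_vecMulVec_eq_one hν₁ hν₂ hν₁₂
  have hρ0psd := hρ0.posSemidef
  have hF : EigenFrame q₁ q₂ ρ₁ ρ₂ S ν₁ ν₂ C₁ C₂ ρ11 ρ22 :=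
    { isHermitian := hS.isHermitian
      isUnit_det := isUnit_of_mul_isUnit_left <| by
        rw [← det_mul, hSS]; exact (isUnit_iff_isUnit_det _).mp hρ0.isUnit
      mul_self := hSS
      norm₁ := hν₁
      norm₂ := hν₂
      orth := hν₁₂
      bar₁ := hbar₁
      bar₂ := hbar₂
      rho0_eq := by
        rw [h11, h22]
        exact hρ0.isHermitian.eq_of_star_dotProduct_mulVec_eq_zero hone (h12 ▸ h12z)
      ρ11_nonneg := by exact_mod_cast h11 ▸ hρ0psd.dotProduct_mulVec_nonneg ν₁
      ρ22_nonneg := by exact_mod_cast h22 ▸ hρ0psd.dotProduct_mulVec_nonneg ν₂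
      ρ11_add_ρ22 := by
        have h := trace_eq_of_vecMulVec_add_eq_one hone (rho0 q₁ q₂ ρ₁ ρ₂)
        rw [trace_rho0 hq htr₁ htr₂, ← h11, ← h22] at h
        exact_mod_cast h.symm }
  have hm : max C₁ (1 - C₁) < q := (hF.le_q0low hC12 hCsum).trans_lt hql
  have hq' : q < C₂ := hqh.trans_le (hF.q0high_le hC12 hCsum)
  exact ⟨fun M₀ M₁ M₂ hP hopt => hF.mul_mul_eq_of_pbarCor_eq_pbarOpt hCsum hm hq' hP hopt,
    hF.pIset_eq hCsum hm hq'⟩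

/-- If `C₁ < C₂`, `ρ₁₂ = 0` and `q₀⁽⁰⁾ < q < q₀⁽¹⁾`, then every
optimal POVM satisfies `ρ₀^½M₀ρ₀^½ = ρ₁₁|ν₁⟩⟨ν₁|`, `M₁ = 0`,
`ρ₀^½M₂ρ₀^½ = ρ₂₂|ν₂⟩⟨ν₂|`; in particular `P_I(q) = {ρ₁₁}`. -/
theorem stmt13
    (q₁ q₂ : ℝ) (ρ₁ ρ₂ : Matrix (Fin 2) (Fin 2) ℂ)
    (hq₁ : 0 < q₁) (hq₂ : 0 < q₂) (hq : q₁ + q₂ = 1)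
    (hρ₁ : ρ₁.PosSemidef) (htr₁ : ρ₁.trace = 1)
    (hρ₂ : ρ₂.PosSemidef) (htr₂ : ρ₂.trace = 1)
    (hρ0 : (rho0 q₁ q₂ ρ₁ ρ₂).PosDef)
    (S : Matrix (Fin 2) (Fin 2) ℂ) (hS : S.PosSemidef) (hSS : S * S = rho0 q₁ q₂ ρ₁ ρ₂)
    (ν₁ ν₂ : Fin 2 → ℂ)
    (hν₁ : star ν₁ ⬝ᵥ ν₁ = 1) (hν₂ : star ν₂ ⬝ᵥ ν₂ = 1) (hν₁₂ : star ν₁ ⬝ᵥ ν₂ = 0)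
    (C₁ C₂ : ℝ) (hC12 : C₁ ≤ C₂) (hCsum : 1 < C₁ + C₂)
    (hbar₁ : S * ((C₁ : ℂ) • vecMulVec ν₁ (star ν₁)
        + ((1 - C₂ : ℝ) : ℂ) • vecMulVec ν₂ (star ν₂)) * S = (q₁ : ℂ) • ρ₁)
    (hbar₂ : S * (((1 - C₁ : ℝ) : ℂ) • vecMulVec ν₁ (star ν₁)
        + (C₂ : ℂ) • vecMulVec ν₂ (star ν₂)) * S = (q₂ : ℂ) • ρ₂)
    (ρ11 ρ22 : ℝ) (ρ12 : ℂ)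
    (h11 : (ρ11 : ℂ) = star ν₁ ⬝ᵥ (rho0 q₁ q₂ ρ₁ ρ₂ *ᵥ ν₁))
    (h22 : (ρ22 : ℂ) = star ν₂ ⬝ᵥ (rho0 q₁ q₂ ρ₁ ρ₂ *ᵥ ν₂))
    (h12 : ρ12 = star ν₁ ⬝ᵥ (rho0 q₁ q₂ ρ₁ ρ₂ *ᵥ ν₂))
    (hClt : C₁ < C₂) (h12z : ρ12 = 0)
    (q : ℝ) (hql : q0low q₁ q₂ ρ₁ ρ₂ < q) (hqh : q < q0high q₁ q₂ ρ₁ ρ₂) :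
    (∀ M₀ M₁ M₂ : Matrix (Fin 2) (Fin 2) ℂ, IsPOVM M₀ M₁ M₂ →
        PbarCor q q₁ q₂ ρ₁ ρ₂ M₀ M₁ M₂ = PbarOpt q q₁ q₂ ρ₁ ρ₂ →
        S * M₀ * S = (ρ11 : ℂ) • vecMulVec ν₁ (star ν₁) ∧ M₁ = 0 ∧
          S * M₂ * S = (ρ22 : ℂ) • vecMulVec ν₂ (star ν₂)) ∧
      PIset q q₁ q₂ ρ₁ ρ₂ = {ρ11} :=
  stmt13_general q₁ q₂ ρ₁ ρ₂ hq htr₁ htr₂ hρ0 S hS hSS ν₁ ν₂ hν₁ hν₂ hν₁₂ C₁ C₂ hC12 hCsum hbar₁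
    hbar₂ ρ11 ρ22 ρ12 h11 h22 h12 h12z q hql hqh

end FRIR
end
end
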